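/- arXiv:alg-geom/9706004 — 4 statements merged into one kernel-verified Lean document; each statement's English description precedes it below -/
import Mathlib

section
/- The number of maximal chains in Young's poset on $\binom{[m+p]}{p}$ equals the number of linear extensions of the product poset of an $m$-element chain and a $p$-element chain. -/
/-- Young's poset: strictly increasing `p`-tuples in `{1,…,m+p}`, ordered componentwise. -/
def YoungPoset (m p : ℕ) : Type := {α : Fin p → Fin (m + p) // StrictMono α}

instance (m p : ℕ) : PartialOrder (YoungPoset m p) :=
  PartialOrder.lift (fun α => α.1) Subtype.val_injective

/-- The bottom element `(1,2,…,p)` of Young's poset. -/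
def youngBot (m p : ℕ) : YoungPoset m p :=
  ⟨fun i => ⟨i.1, lt_of_lt_of_le i.2 (Nat.le_add_left p m)⟩,
   fun _ _ h => Fin.mk_lt_mk.mpr h⟩

/-- The top element `(m+1,…,m+p)` of Young's poset. -/
def youngTop (m p : ℕ) : YoungPoset m p :=
  ⟨fun i => ⟨m + i.1, by omega⟩,
   fun _ _ h => Fin.mk_lt_mk.mpr (Nat.add_lt_add_left h m)⟩

/-!
Young's poset is isomorphic to the lattice of lower sets of `[m] × [p]`: the tuple `α` corresponds
to the Young diagram with row lengths `α j - j`. In the lattice of lower sets of any poset `P`, a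
covering step adds exactly one element, so a maximal chain `∅ = c₀ ⋖ ⋯ ⋖ cₙ = P` enumerates `P`,
and the enumeration is a linear extension; conversely a linear extension `f` yields the maximal
chain `cₖ = {x | f x < k}`.
-/

section CoverChains

variable {α β : Type*} [Preorder α] [Preorder β]

def coverChains (a b : α) (n : ℕ) : Set (Fin (n + 1) → α) :=
  {c | c 0 = a ∧ c (Fin.last n) = b ∧ ∀ i : Fin n, c i.castSucc ⋖ c i.succ}

def OrderIso.coverChainsCongr (e : α ≃o β) (a b : α) (n : ℕ) :
    coverChains a b n ≃ coverChains (e a) (e b) n :=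
  (Equiv.piCongrRight fun _ => e.toEquiv).subtypeEquiv fun c => by
    simp [coverChains, apply_covBy_apply_iff e]

end CoverChains

namespace LowerSet

variable {P : Type*} [PartialOrder P]

theorem covBy_iff_exists_insert {s t : LowerSet P} :
    s ⋖ t ↔ ∃ a ∉ s, insert a (s : Set P) = t := by
  constructor
  · intro h
    have generates : ∀ a ∈ t, a ∉ s → (t : Set P) = (s : Set P) ∪ Set.Iic a := by
      intro a hat has
      rcases h.eq_or_eq (le_sup_left (b := Iic a)) (sup_le h.le (Iic_le.2 hat)) with hs | ht
      · exact (has (hs ▸ (show a ∈ s ⊔ Iic a by simp))).elim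
      · rw [← ht, coe_sup, coe_Iic]
    obtain ⟨a, hat, has⟩ := Set.exists_of_ssubset (coe_ssubset_coe.2 h.lt)
    refine ⟨a, has, Set.Subset.antisymm (Set.insert_subset hat h.le) fun b hbt => ?_⟩
    by_cases hbs : b ∈ s
    · exact Or.inr hbs
    · have hba : b ≤ a := ((generates a hat has).subset hbt).resolve_left hbs
      have hab : a ≤ b := ((generates b hbt hbs).subset hat).resolve_left has
      exact Or.inl (le_antisymm hba hab)
  · rintro ⟨a, ha, hst⟩
    refine ⟨coe_ssubset_coe.1 (hst ▸ Set.ssubset_insert ha), fun u hsu hut => ?_⟩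
    exact (Set.covBy_insert ha).2 (coe_ssubset_coe.2 hsu) (hst ▸ coe_ssubset_coe.2 hut)

end LowerSet

section LinearExtension

variable {P : Type*} [PartialOrder P] {n : ℕ}

def extensionChain (f : P → Fin n) (hf : Monotone f) (k : Fin (n + 1)) : LowerSet P where
  carrier := {x | (f x : ℕ) < k}
  lower' _ _ hyx hx := show (f _ : ℕ) < k from lt_of_le_of_lt (hf hyx) hx

@[simp]
theorem mem_extensionChain {f : P → Fin n} {hf : Monotone f} {k : Fin (n + 1)} {x : P} :
    x ∈ extensionChain f hf k ↔ (f x : ℕ) < k := by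
  rfl

theorem extensionChain_mem_coverChains (f : P ≃ Fin n) (hf : Monotone f) :
    extensionChain f hf ∈ coverChains ⊥ ⊤ n := by
  refine ⟨?_, ?_, fun i => LowerSet.covBy_iff_exists_insert.2 ⟨f.symm i, by simp, ?_⟩⟩
  · ext x; simp
  · ext x; simp
  · ext x
    simp only [Set.mem_insert_iff, SetLike.mem_coe, mem_extensionChain, Equiv.eq_symm_apply,
      Fin.ext_iff, Fin.val_succ, Fin.val_castSucc]
    omega

theorem extensionChain_injective {f g : P → Fin n} {hf : Monotone f} {hg : Monotone g}
    (h : extensionChain f hf = extensionChain g hg) : f = g := by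
  funext x
  have key (k : Fin (n + 1)) : (f x : ℕ) < k ↔ (g x : ℕ) < k := by
    simpa using SetLike.ext_iff.1 (congrFun h k) x
  have hfg := (key (f x).succ).1 (by simp)
  have hgf := (key (g x).succ).2 (by simp)
  simp only [Fin.val_succ] at hfg hgf
  omega

theorem exists_extensionChain_eq {c : Fin (n + 1) → LowerSet P} (hc : c ∈ coverChains ⊥ ⊤ n) :
    ∃ (f : P ≃ Fin n) (hf : Monotone f), extensionChain f hf = c := by
  obtain ⟨h0, hlast, hcov⟩ := hc
  choose g hgc hg using fun i => LowerSet.covBy_iff_exists_insert.1 (hcov i)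
  have hc_image (k : Fin (n + 1)) : (c k : Set P) = g '' {i : Fin n | (i : ℕ) < k} := by
    induction k using Fin.induction with
    | zero => simp [h0]
    | succ i ih =>
      have : {j : Fin n | (j : ℕ) < i.succ} = insert i {j : Fin n | (j : ℕ) < i.castSucc} := by
        ext j
        simp only [Set.mem_insert_iff, Set.mem_ofPred_eq, Fin.ext_iff, Fin.val_succ,
          Fin.val_castSucc]
        omega
      rw [← hg i, ih, this, Set.image_insert_eq]
  have hinj : g.Injective := Function.Injective.of_lt_imp_ne fun i j hij hgij =>
    hgc j (by rw [← SetLike.mem_coe, hc_image]; exact ⟨i, hij, hgij⟩)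
  have hsurj : g.Surjective := fun x => by
    have hx : x ∈ (c (Fin.last n) : Set P) := by simp [hlast]
    obtain ⟨i, -, hi⟩ := hc_image _ ▸ hx
    exact ⟨i, hi⟩
  set e := Equiv.ofBijective g ⟨hinj, hsurj⟩
  have hmem (x : P) (k : Fin (n + 1)) : x ∈ c k ↔ (e.symm x : ℕ) < k := by
    rw [← SetLike.mem_coe, hc_image]
    constructor
    · rintro ⟨i, hi, rfl⟩
      rwa [show e.symm (g i) = i from e.symm_apply_apply i]
    · exact fun h => ⟨e.symm x, h, e.apply_symm_apply x⟩
  have hmono : Monotone e.symm := fun x y hxy => by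
    have hy : y ∈ c (e.symm y).succ := (hmem y _).2 (by simp)
    have := (hmem x (e.symm y).succ).1 ((c (e.symm y).succ).lower hxy hy)
    rw [Fin.val_succ] at this
    exact Fin.le_def.2 (by omega)
  exact ⟨e.symm, hmono, funext fun k => SetLike.ext fun x => by rw [mem_extensionChain, hmem]⟩

noncomputable def linearExtensionsEquivCoverChains :
    {f : P ≃ Fin n // Monotone f} ≃ coverChains (⊥ : LowerSet P) ⊤ n :=
  Equiv.ofBijective (fun f => ⟨extensionChain f.1 f.2, extensionChain_mem_coverChains f.1 f.2⟩)
    ⟨fun f g h => Subtype.ext (Equiv.coe_fn_injective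
        (extensionChain_injective (hf := f.2) (hg := g.2) (congrArg Subtype.val h))),
      fun c => let ⟨f, hf, h⟩ := exists_extensionChain_eq c.2; ⟨⟨f, hf⟩, Subtype.ext h⟩⟩

end LinearExtension

theorem StrictMono.val_add_le_val_add {p q : ℕ} {w : Fin p → Fin q} (hw : StrictMono w)
    {i j : Fin p} (hij : i ≤ j) : (w i : ℕ) + j ≤ w j + i := by
  obtain ⟨j, hj⟩ := j
  induction j with
  | zero =>
    obtain rfl : i = ⟨0, hj⟩ := Fin.ext (Nat.le_zero.1 hij)
    rfl
  | succ j ih =>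
    rcases Nat.lt_or_ge (i : ℕ) (j + 1) with hlt | hge
    · have hstep : w ⟨j, by omega⟩ < w ⟨j + 1, hj⟩ := hw (Fin.mk_lt_mk.2 (by omega))
      have := ih (by omega) (Fin.mk_le_mk.2 (by omega))
      simp only [Fin.lt_def] at hstep this ⊢
      omega
    · have : i = ⟨j + 1, hj⟩ := Fin.ext (le_antisymm hij hge)
      subst this
      rfl

theorem Finset.mem_iff_val_lt_card_of_isLowerSet {m : ℕ} {s : Finset (Fin m)}
    (hs : IsLowerSet (s : Set (Fin m))) (a : Fin m) : a ∈ s ↔ (a : ℕ) < s.card := by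
  constructor
  · intro ha
    have : Finset.Iic a ⊆ s := fun b hb => hs (Finset.mem_Iic.1 hb) ha
    simpa using Finset.card_le_card this
  · intro ha
    by_contra has
    have : s ⊆ Finset.Iio a := fun b hb =>
      Finset.mem_Iio.2 (lt_of_not_ge fun hab => has (hs hab hb))
    simpa using (Finset.card_le_card this).trans_lt' ha

namespace YoungPoset

variable {m p : ℕ}

theorem le_val_apply (α : YoungPoset m p) (j : Fin p) : (j : ℕ) ≤ α.1 j := by
  have := α.2.val_add_le_val_add (show (⟨0, j.pos⟩ : Fin p) ≤ j from Nat.zero_le _)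
  dsimp only at this
  omega

theorem val_apply_le (α : YoungPoset m p) (j : Fin p) : (α.1 j : ℕ) ≤ m + j := by
  have hj := j.isLt
  have hgap := α.2.val_add_le_val_add (show j ≤ ⟨p - 1, by omega⟩ from Nat.le_sub_one_of_lt hj)
  have := (α.1 ⟨p - 1, by omega⟩).isLt
  dsimp only at hgap
  omega

def mk (f : Fin p → Fin (m + p)) (hf : StrictMono f) : YoungPoset m p := ⟨f, hf⟩

/-- The Young diagram of `α`: row `b` has length `α b' - b'` where `b' = b.rev`. Rows are reversed
because `j ↦ α j - j` is monotone while a lower set of `Fin m × Fin p` has antitone row lengths. -/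
def toLowerSet (α : YoungPoset m p) : LowerSet (Fin m × Fin p) where
  carrier := {x | (x.1 : ℕ) + x.2.rev < α.1 x.2.rev}
  lower' := by
    rintro ⟨a, b⟩ ⟨a', b'⟩ ⟨ha, hb⟩ (hx : (a : ℕ) + b.rev < α.1 b.rev)
    change (a' : ℕ) ≤ a at ha
    change b' ≤ b at hb
    have := α.2.val_add_le_val_add (Fin.rev_le_rev.2 hb)
    show (a' : ℕ) + b'.rev < α.1 b'.rev
    omega

@[simp]
theorem mem_toLowerSet {α : YoungPoset m p} {x : Fin m × Fin p} :
    x ∈ toLowerSet α ↔ (x.1 : ℕ) + x.2.rev < α.1 x.2.rev := by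
  rfl

theorem toLowerSet_le_toLowerSet {α β : YoungPoset m p} :
    toLowerSet α ≤ toLowerSet β ↔ α ≤ β := by
  constructor
  · intro h j
    by_contra hlt
    replace hlt : (β.1 j : ℕ) < α.1 j := lt_of_not_ge hlt
    have hβ := le_val_apply β j
    have hα := val_apply_le α j
    have hmem : (⟨β.1 j - j, by omega⟩, j.rev) ∈ toLowerSet α := by
      rw [mem_toLowerSet]
      dsimp only
      rw [Fin.rev_rev]
      omega
    have := h hmem
    rw [SetLike.mem_coe, mem_toLowerSet] at this
    dsimp only at this
    rw [Fin.rev_rev] at this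
    omega
  · intro h x (hx : x ∈ toLowerSet α)
    show x ∈ toLowerSet β
    rw [mem_toLowerSet] at hx ⊢
    exact hx.trans_le (h x.2.rev)

theorem toLowerSet_surjective : Function.Surjective (toLowerSet (m := m) (p := p)) := by
  classical
  intro I
  let column (b : Fin p) : Finset (Fin m) := {a | (a, b) ∈ I}
  have column_mono {b b' : Fin p} (h : b ≤ b') : column b' ⊆ column b := fun a ha => by
    simp only [column, Finset.mem_filter, Finset.mem_univ, true_and] at ha ⊢
    exact I.lower (show (a, b) ≤ (a, b') from ⟨le_rfl, h⟩) ha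
  have mem_column (a : Fin m) (b : Fin p) : (a, b) ∈ I ↔ (a : ℕ) < (column b).card := by
    rw [← Finset.mem_iff_val_lt_card_of_isLowerSet]
    · simp [column]
    · intro a a' h ha
      have ha : (a, b) ∈ I := by simpa [column] using ha
      simpa [column] using I.lower (show (a', b) ≤ (a, b) from ⟨h, le_rfl⟩) ha
  have hlt (j : Fin p) : (j : ℕ) + (column j.rev).card < m + p := by
    have := (column j.rev).card_le_univ
    simp only [Fintype.card_fin] at this
    omega
  have hmono : StrictMono fun j : Fin p => (⟨j + (column j.rev).card, hlt j⟩ : Fin (m + p)) := by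
    intro j j' h
    have := Finset.card_le_card (column_mono (Fin.rev_le_rev.2 h.le))
    rw [Fin.lt_def] at h ⊢
    dsimp only
    omega
  refine ⟨mk _ hmono, SetLike.ext fun ⟨a, b⟩ => ?_⟩
  rw [mem_toLowerSet, mem_column]
  dsimp only [mk]
  rw [Fin.rev_rev]
  omega

theorem toLowerSet_youngBot : toLowerSet (youngBot m p) = ⊥ :=
  SetLike.ext fun x => by rw [mem_toLowerSet]; simp [youngBot]

theorem toLowerSet_youngTop : toLowerSet (youngTop m p) = ⊤ :=
  SetLike.ext fun x => by rw [mem_toLowerSet]; simp [youngTop]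

noncomputable def orderIsoLowerSet : YoungPoset m p ≃o LowerSet (Fin m × Fin p) :=
  OrderIso.ofSurjective (OrderEmbedding.ofMapLEIff toLowerSet fun _ _ => toLowerSet_le_toLowerSet)
    toLowerSet_surjective

theorem orderIsoLowerSet_apply (α : YoungPoset m p) : orderIsoLowerSet α = toLowerSet α := rfl

end YoungPoset

/-- The number of maximal chains in Young's poset equals the number of
linear extensions (monotone bijections onto a chain) of the product of an `m`-chain
and a `p`-chain. -/
theorem stmt_5 (m p : ℕ) :
    Nat.card {c : Fin (m * p + 1) → YoungPoset m p //
        c 0 = youngBot m p ∧ c (Fin.last (m * p)) = youngTop m p ∧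
        ∀ i : Fin (m * p), c i.castSucc ⋖ c i.succ} =
      Nat.card {f : Fin m × Fin p ≃ Fin (m * p) // Monotone f} := by
  have e := YoungPoset.orderIsoLowerSet.coverChainsCongr (youngBot m p) (youngTop m p) (m * p)
  rw [YoungPoset.orderIsoLowerSet_apply, YoungPoset.orderIsoLowerSet_apply,
    YoungPoset.toLowerSet_youngBot, YoungPoset.toLowerSet_youngTop] at e
  exact Nat.card_congr (e.trans linearExtensionsEquivCoverChains.symm)
end

section
/- Let $\alpha, \alpha' \in \binom{[m+p]}{p}$ satisfy Pieri's condition: $\alpha'_1 \leq m+p+1-\alpha_p < \alpha'_2 \leq m+p+1-\alpha_{p-1} < \cdots < \alpha'_p \leq m+p+1-\alpha_1$, and let $q := mp - |\alpha| - |\alpha'|$ where $|\alpha| = \sum_j(\alpha_j - j)$. Let $N \subseteq \mathbb{C}^{m+p}$ be a linear subspace of dimension $m+1-q$ none of whose Plücker coordinates vanish (i.e., the projection of $N$ to every coordinate subspace spanned by $m+1-q$ standard basis vectors is an isomorphism). Then with $C := C_1 \oplus \cdots \oplus C_p$ where $C_j = \langle e_{\alpha'_j}, \dots, e_{\alpha^\vee_j}\rangle$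 and $\alpha^\vee_j = m+p+1-\alpha_{p+1-j}$, the intersection $C \cap N$ is one-dimensional. -/
/-!
The subspace `C` is the coordinate subspace on the disjoint union `T` of the intervals
`[α'_j, α^∨_j]`, and the codimension formula for `q` shows `|T| = p + q`. Hence
`dim C + dim N = (m + p) + 1`, which forces `C ∩ N ≠ 0`. Conversely, for `i₀ ∈ T` the
coordinates outside `T` together with `i₀` form a set of `m + 1 - q` coordinates on which
every vector of `C ∩ N` vanishing at `i₀` vanishes; genericity of `N` makes such a vector
zero, so evaluation at `i₀` embeds `C ∩ N` into `ℂ`.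
-/

open Module Submodule Finset

section CoordinateSubspace

variable (K : Type*) {ι : Type*} [Field K] [DecidableEq ι]

def coordinateSubspace (T : Finset ι) : Submodule K (ι → K) :=
  span K ((fun i => (Pi.single i 1 : ι → K)) '' T)

variable {K}

theorem finrank_coordinateSubspace (T : Finset ι) : finrank K (coordinateSubspace K T) = #T := by
  have hli : LinearIndependent K fun i : (T : Set ι) => (Pi.single (i : ι) 1 : ι → K) :=
    (Pi.linearIndependent_single_one ι K).comp _ Subtype.val_injective
  rw [coordinateSubspace, Set.image_eq_range, finrank_span_eq_card hli]
  exact Fintype.card_coe T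

theorem apply_eq_zero_of_mem_coordinateSubspace {T : Finset ι} {v : ι → K}
    (hv : v ∈ coordinateSubspace K T) {i : ι} (hi : i ∉ T) : v i = 0 := by
  suffices coordinateSubspace K T ≤ LinearMap.ker (LinearMap.proj i) from this hv
  rw [coordinateSubspace, span_le]
  rintro _ ⟨j, hj, rfl⟩
  exact Pi.single_eq_of_ne (by rintro rfl; exact hi hj) 1

theorem finrank_coordinateSubspace_inf_eq_one [Fintype ι] (T : Finset ι)
    (N : Submodule K (ι → K))
    (hdim : #T + finrank K N = Fintype.card ι + 1)
    (hN : ∀ S : Finset ι, #S = finrank K N → ∀ v ∈ N, (∀ i ∈ S, v i = 0) → v = 0) :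
    finrank K ↥(coordinateSubspace K T ⊓ N) = 1 := by
  set C := coordinateSubspace K T
  have hsup := finrank_sup_add_finrank_inf_eq C N
  have hsup_le : finrank K ↥(C ⊔ N) ≤ Fintype.card ι := (finrank_le _).trans_eq (finrank_pi K)
  have hN_le : finrank K N ≤ Fintype.card ι := (finrank_le N).trans_eq (finrank_pi K)
  rw [finrank_coordinateSubspace] at hsup
  obtain ⟨i₀, hi₀⟩ : T.Nonempty := card_pos.mp (by omega)
  have hinj :
      Function.Injective ((LinearMap.proj i₀ : (ι → K) →ₗ[K] K) ∘ₗ (C ⊓ N).subtype) := by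
    rw [← LinearMap.ker_eq_bot, LinearMap.ker_eq_bot']
    rintro ⟨v, hvC, hvN⟩ hv₀
    have hS : #(insert i₀ Tᶜ) = finrank K N := by
      rw [card_insert_of_notMem (by simpa using hi₀), card_compl]
      have := T.card_le_univ
      omega
    refine Subtype.ext (hN _ hS v hvN fun i hi => ?_)
    rcases mem_insert.mp hi with rfl | hi
    · exact hv₀
    · exact apply_eq_zero_of_mem_coordinateSubspace hvC (mem_compl.mp hi)
  have hle_one := LinearMap.finrank_le_finrank_of_injective hinj
  rw [finrank_self] at hle_one
  omega

end CoordinateSubspace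

theorem card_filter_exists_mem_Icc {n p : ℕ} (a b : Fin p → ℕ) (ha : ∀ j, 1 ≤ a j)
    (hb : ∀ j, b j ≤ n) (hab : ∀ j k, j < k → b j < a k) :
    #{i : Fin n | ∃ j, a j ≤ (i : ℕ) + 1 ∧ (i : ℕ) + 1 ≤ b j} = ∑ j, (b j + 1 - a j) := by
  have himage :
      image (fun i : Fin n => (i : ℕ) + 1) {i | ∃ j, a j ≤ (i : ℕ) + 1 ∧ (i : ℕ) + 1 ≤ b j}
        = univ.biUnion fun j => Icc (a j) (b j) := by
    ext x
    simp only [mem_image, mem_filter, mem_univ, true_and, mem_biUnion, mem_Icc]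
    constructor
    · rintro ⟨i, hi, rfl⟩
      exact hi
    · rintro ⟨j, hj⟩
      have := ha j
      have := hb j
      exact ⟨⟨x - 1, by omega⟩, ⟨j, by simp only; omega⟩, by simp only; omega⟩
  rw [← card_image_of_injective _ fun i i' h => Fin.ext (Nat.add_right_cancel h), himage,
    card_biUnion]
  · simp only [Nat.card_Icc]
  · intro j _ k _ hjk
    rw [Function.onFun, disjoint_left]
    intro x hxj hxk
    rw [mem_Icc] at hxj hxk
    rcases hjk.lt_or_gt with h | h
    · have := hab j k h; omega
    · have := hab k j h; omega

theorem lt_of_lt_of_lt_succ {p : ℕ} {a b : Fin p → ℕ} (ha : Monotone a)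
    (hab : ∀ k : Fin p, ∀ h : (k : ℕ) + 1 < p, b k < a ⟨(k : ℕ) + 1, h⟩) {j k : Fin p}
    (hjk : j < k) : b j < a k :=
  (hab j (by omega)).trans_le (ha (Fin.mk_le_of_le_val (by omega)))

/-- Reversing `α` pairs the `j`-th term of `|α|` with the `j`-th term of `|α'|`. -/
theorem sum_card_pieri_intervals (m p q : ℕ) (α α' αv : Fin p → ℕ) (hα2 : ∀ j, α j ≤ m + p)
    (hαv : ∀ j, αv j = m + p + 1 - α (Fin.rev j)) (hpieri1 : ∀ k : Fin p, α' k ≤ αv k)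
    (hcodim : (∑ j : Fin p, ((α j : ℤ) - ((j : ℕ) + 1)))
        + (∑ j : Fin p, ((α' j : ℤ) - ((j : ℕ) + 1))) + q = m * p) :
    ∑ j, (αv j + 1 - α' j) = p + q := by
  have hterm : ∀ j : Fin p, ((αv j + 1 - α' j : ℕ) : ℤ) =
      (m + 1) - ((α (Fin.rev j) : ℤ) - ((Fin.rev j : ℕ) + 1)) - ((α' j : ℤ) - ((j : ℕ) + 1)) := by
    intro j
    have := hα2 (Fin.rev j)
    have := hpieri1 j
    have := hαv j
    rw [Fin.val_rev]
    omega
  have hrev := Equiv.sum_comp Fin.revPerm fun j => (α j : ℤ) - ((j : ℕ) + 1)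
  simp only [Fin.revPerm_apply] at hrev
  zify
  rw [sum_congr rfl fun j _ => hterm j, sum_sub_distrib, sum_sub_distrib, hrev]
  simp only [sum_const, card_univ, Fintype.card_fin, nsmul_eq_mul]
  linarith

theorem stmt_9_general (m p q : ℕ) (hqm : q ≤ m)
    (α α' : Fin p → ℕ)
    (hα' : StrictMono α')
    (hα1 : ∀ j, 1 ≤ α j) (hα2 : ∀ j, α j ≤ m + p)
    (hα'1 : ∀ j, 1 ≤ α' j)
    (αv : Fin p → ℕ) (hαv : ∀ j, αv j = m + p + 1 - α (Fin.rev j))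
    -- Pieri's condition (3.1):
    (hpieri1 : ∀ k : Fin p, α' k ≤ αv k)
    (hpieri2 : ∀ k : Fin p, ∀ h : (k : ℕ) + 1 < p, αv k < α' ⟨(k : ℕ) + 1, h⟩)
    -- q = mp - |α| - |α'|:
    (hcodim : (∑ j : Fin p, ((α j : ℤ) - ((j : ℕ) + 1)))
        + (∑ j : Fin p, ((α' j : ℤ) - ((j : ℕ) + 1))) + q = m * p)
    (N : Submodule ℂ (Fin (m + p) → ℂ))
    (hNdim : Module.finrank ℂ ↥N = m + 1 - q)
    (hNgen : ∀ S : Finset (Fin (m + p)), S.card = m + 1 - q →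
      ∀ v ∈ N, (∀ i ∈ S, v i = 0) → v = 0)
    (C : Submodule ℂ (Fin (m + p) → ℂ))
    (hC : C = Submodule.span ℂ
      {v | ∃ i : Fin (m + p), (∃ j : Fin p, α' j ≤ (i : ℕ) + 1 ∧ (i : ℕ) + 1 ≤ αv j) ∧
        v = Pi.single i (1 : ℂ)}) :
    Module.finrank ℂ ↥(C ⊓ N) = 1 := by
  classical
  set T : Finset (Fin (m + p)) := {i | ∃ j, α' j ≤ (i : ℕ) + 1 ∧ (i : ℕ) + 1 ≤ αv j}
  have hCT : C = coordinateSubspace ℂ T := by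
    rw [hC, coordinateSubspace]
    congr 1
    ext v
    simp [T, eq_comm]
  have hαv_le : ∀ j, αv j ≤ m + p := fun j => by have := hα1 (Fin.rev j); rw [hαv j]; omega
  have hT : #T = p + q := by
    rw [card_filter_exists_mem_Icc α' αv hα'1 hαv_le
        fun j k => lt_of_lt_of_lt_succ hα'.monotone hpieri2,
      sum_card_pieri_intervals m p q α α' αv hα2 hαv hpieri1 hcodim]
  rw [hCT]
  apply finrank_coordinateSubspace_inf_eq_one T N
  · rw [hT, hNdim, Fintype.card_fin]
    omega
  · rwa [hNdim]

/-- If `α, α'` satisfy Pieri's condition, `q = mp - |α| - |α'|`, and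
`N ⊆ ℂ^{m+p}` has dimension `m+1-q` with no vanishing Plücker coordinate (it meets every
coordinate subspace of complementary dimension trivially), then with
`C = C_1 ⊕ ⋯ ⊕ C_p`, `C_j = ⟨e_{α'_j},…,e_{α^∨_j}⟩`, the intersection `C ∩ N` is
one-dimensional. -/
theorem stmt_9 (m p q : ℕ) (hp : 1 ≤ p) (hq1 : 1 ≤ q) (hqm : q ≤ m)
    (α α' : Fin p → ℕ)
    (hα : StrictMono α) (hα' : StrictMono α')
    (hα1 : ∀ j, 1 ≤ α j) (hα2 : ∀ j, α j ≤ m + p)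
    (hα'1 : ∀ j, 1 ≤ α' j) (hα'2 : ∀ j, α' j ≤ m + p)
    (αv : Fin p → ℕ) (hαv : ∀ j, αv j = m + p + 1 - α (Fin.rev j))
    -- Pieri's condition (3.1):
    (hpieri1 : ∀ k : Fin p, α' k ≤ αv k)
    (hpieri2 : ∀ k : Fin p, ∀ h : (k : ℕ) + 1 < p, αv k < α' ⟨(k : ℕ) + 1, h⟩)
    -- q = mp - |α| - |α'|:
    (hcodim : (∑ j : Fin p, ((α j : ℤ) - ((j : ℕ) + 1)))
        + (∑ j : Fin p, ((α' j : ℤ) - ((j : ℕ) + 1))) + q = m * p)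
    (N : Submodule ℂ (Fin (m + p) → ℂ))
    (hNdim : Module.finrank ℂ ↥N = m + 1 - q)
    (hNgen : ∀ S : Finset (Fin (m + p)), S.card = m + 1 - q →
      ∀ v ∈ N, (∀ i ∈ S, v i = 0) → v = 0)
    (C : Submodule ℂ (Fin (m + p) → ℂ))
    (hC : C = Submodule.span ℂ
      {v | ∃ i : Fin (m + p), (∃ j : Fin p, α' j ≤ (i : ℕ) + 1 ∧ (i : ℕ) + 1 ≤ αv j) ∧
        v = Pi.single i (1 : ℂ)}) :
    Module.finrank ℂ ↥(C ⊓ N) = 1 :=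
  stmt_9_general m p q hqm α α' hα' hα1 hα2 hα'1 αv hαv hpieri1 hpieri2 hcodim N hNdim hNgen C hC
end

section
/- Let $\alpha \in \binom{[m+p]}{p}$ and $q \geq 1$. Let $\alpha * q$ denote the set of $\beta \in \binom{[m+p]}{p}$ with $|\beta| = |\alpha| + q$ (where $|\alpha| = \sum_j (\alpha_j - j)$) such that $\alpha$ and $\beta^\vee$ satisfy Pieri's condition $\beta^\vee_1 \leq m+p+1-\alpha_p < \beta^\vee_2 \leq \cdots < \beta^\vee_p \leq m+p+1-\alpha_1$, where $\beta^\vee_j = m+p+1-\beta_{p+1-j}$. Then $\alpha * q$ equals the set of endpoints of increasing chains of length $q$ in Young's poset that begin at $\alpha$. -/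
private lemma strictMono_of_lt_succ' {p : ℕ} (f : Fin p → ℕ)
    (h : ∀ (j : Fin p) (hj : (j : ℕ) + 1 < p), f j < f ⟨(j : ℕ) + 1, hj⟩) :
    StrictMono f := by
  have key : ∀ b, ∀ (hb : b < p), ∀ (a : ℕ) (ha : a < p), a < b → f ⟨a, ha⟩ < f ⟨b, hb⟩ := by
    intro b
    induction b with
    | zero => intro _ _ _ h; omega
    | succ b ih =>
      intro hb a ha hab
      have hbp : b < p := by omega
      have hstep : f ⟨b, hbp⟩ < f ⟨b + 1, hb⟩ := h ⟨b, hbp⟩ hb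
      rcases Nat.lt_or_ge a b with h' | h'
      · exact lt_trans (ih hbp a ha h') hstep
      · have : a = b := by omega
        subst this; exact hstep
  intro a b hab
  have := key b.1 b.2 a.1 a.2 hab
  simpa using this


/-- `α * q` (the set of `β` with `|β| = |α| + q` such that `α, β^∨` satisfy
Pieri's condition) equals the set of endpoints of increasing chains of length `q` in
Young's poset that begin at `α`.  Sequences in Young's poset are written as strictly
increasing `ℕ`-valued tuples with entries in `{1,…,m+p}`, a cover increments exactly one
coordinate, and a chain is increasing when its sequence of changed indices is weakly
increasing. -/
theorem stmt_15 (m p q : ℕ) (hp : 1 ≤ p) (hq : 1 ≤ q)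
    (α : Fin p → ℕ) (hα : StrictMono α) (hα1 : ∀ j, 1 ≤ α j) (hα2 : ∀ j, α j ≤ m + p)
    (β : Fin p → ℕ) (hβ : StrictMono β) (hβ1 : ∀ j, 1 ≤ β j) (hβ2 : ∀ j, β j ≤ m + p)
    (βv : Fin p → ℕ) (hβv : ∀ k, βv k = m + p + 1 - β (Fin.rev k)) :
    -- `β ∈ α * q` :  |β| = |α| + q  and Pieri's condition for (α, β^∨)
    (((∑ j : Fin p, ((β j : ℤ) - ((j : ℕ) + 1)))
        = (∑ j : Fin p, ((α j : ℤ) - ((j : ℕ) + 1))) + q) ∧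
      (∀ k : Fin p, (βv k : ℤ) ≤ (m : ℤ) + p + 1 - α (Fin.rev k)) ∧
      (∀ k : Fin p, ∀ h : (k : ℕ) + 1 < p,
        (m : ℤ) + p + 1 - α (Fin.rev k) < βv ⟨(k : ℕ) + 1, h⟩))
    ↔
    -- `β` is the endpoint of an increasing chain of length `q` starting at `α`
    (∃ c : Fin (q + 1) → (Fin p → ℕ),
      c 0 = α ∧ c (Fin.last q) = β ∧
      (∀ i : Fin (q + 1), StrictMono (c i) ∧ (∀ j, 1 ≤ c i j) ∧ (∀ j, c i j ≤ m + p)) ∧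
      -- each step is a cover: exactly one coordinate increases, by one
      (∀ i : Fin q, ∃ j : Fin p,
        c i.succ j = c i.castSucc j + 1 ∧ ∀ j' ≠ j, c i.succ j' = c i.castSucc j') ∧
      -- increasing: the changed indices weakly increase along the chain
      (∀ i₁ i₂ : Fin q, (i₁ : ℕ) + 1 = (i₂ : ℕ) →
        ∀ j₁ j₂ : Fin p, c i₁.succ j₁ ≠ c i₁.castSucc j₁ →
          c i₂.succ j₂ ≠ c i₂.castSucc j₂ → j₁ ≤ j₂)) := by
  have hβc : ∀ k : Fin p, (βv k : ℤ) = (m : ℤ) + p + 1 - β (Fin.rev k) := by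
    intro k
    have h1 := hβv k
    have h2 := hβ2 (Fin.rev k)
    omega
  constructor
  · rintro ⟨hsum, hii, hiii⟩
    -- derive pointwise inequality α ≤ β
    have hle : ∀ j : Fin p, α j ≤ β j := by
      intro j
      have h2 := hii (Fin.rev j)
      rw [hβc, Fin.rev_rev] at h2
      have := hβ2 j; have := hα2 j
      omega
    -- derive the horizontal strip condition
    have hstrip : ∀ (j : Fin p) (hj : (j : ℕ) + 1 < p), β j < α ⟨(j : ℕ) + 1, hj⟩ := by
      intro j hj
      have hjp := j.isLt
      have hk : p - 2 - (j : ℕ) < p := by omega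
      have hk1 : (p - 2 - (j : ℕ)) + 1 < p := by omega
      have h3 := hiii ⟨p - 2 - (j : ℕ), hk⟩ hk1
      rw [hβc] at h3
      have hrev1 : Fin.rev (⟨p - 2 - (j : ℕ), hk⟩ : Fin p) = ⟨(j : ℕ) + 1, hj⟩ := by
        ext; rw [Fin.val_rev]; simp; omega
      have hrev2 : Fin.rev (⟨(p - 2 - (j : ℕ)) + 1, hk1⟩ : Fin p) = j := by
        ext; rw [Fin.val_rev]; simp; omega
      rw [hrev1, hrev2] at h3
      have := hα2 ⟨(j : ℕ) + 1, hj⟩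
      have := hβ2 j
      omega
    -- total size of the strip is q
    have hsum' : ∑ j : Fin p, (β j - α j) = q := by
      have h1 : ((∑ j : Fin p, (β j - α j) : ℕ) : ℤ)
          = ∑ j : Fin p, ((β j : ℤ) - (α j : ℤ)) := by
        push_cast
        refine Finset.sum_congr rfl fun j _ => ?_
        have := hle j; omega
      rw [Finset.sum_sub_distrib] at h1
      rw [Finset.sum_sub_distrib, Finset.sum_sub_distrib] at hsum
      have h2 : ((∑ j : Fin p, β j : ℕ) : ℤ) = ∑ j : Fin p, (β j : ℤ) := by push_cast; rfl
      have h3 : ((∑ j : Fin p, α j : ℕ) : ℤ) = ∑ j : Fin p, (α j : ℤ) := by push_cast; rfl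
      omega
    -- prefix sums
    set S : ℕ → ℕ := fun n => ∑ j : Fin p, if (j : ℕ) < n then β j - α j else 0 with hSdef
    have hS0 : S 0 = 0 := by simp [hSdef]
    have hSmono : Monotone S := by
      intro a b hab
      refine Finset.sum_le_sum fun j _ => ?_
      split_ifs <;> omega
    have hStop : ∀ n, S n ≤ q := by
      intro n
      calc S n ≤ ∑ j : Fin p, (β j - α j) := by
            refine Finset.sum_le_sum fun j _ => ?_
            split_ifs <;> omega
        _ = q := hsum'
    have hSp : S p = q := by
      rw [hSdef]
      simp only [Fin.is_lt, if_true]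
      exact hsum'
    have hSstep : ∀ n (hn : n < p), S (n + 1) = S n + (β ⟨n, hn⟩ - α ⟨n, hn⟩) := by
      intro n hn
      have h1 : ∀ j : Fin p, (if (j : ℕ) < n + 1 then β j - α j else 0)
          = (if (j : ℕ) < n then β j - α j else 0) + (if j = ⟨n, hn⟩ then β j - α j else 0) := by
        intro j
        have hiff : (j = (⟨n, hn⟩ : Fin p)) ↔ (j : ℕ) = n := Fin.ext_iff
        by_cases h : (j : ℕ) = n
        · rw [if_pos (hiff.mpr h)]
          split_ifs <;> omega
        · rw [if_neg (fun hh => h (hiff.mp hh))]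
          split_ifs <;> omega
      rw [hSdef]
      simp only []
      rw [Finset.sum_congr rfl (fun j _ => h1 j), Finset.sum_add_distrib,
        Finset.sum_ite_eq' Finset.univ (⟨n, hn⟩ : Fin p) (fun j => β j - α j)]
      simp
    -- the chain
    refine ⟨fun i j => α j + min (β j - α j) ((i : ℕ) - S (j : ℕ)), ?_, ?_, ?_, ?_, ?_⟩
    · funext j
      show α j + min (β j - α j) (((0 : Fin (q + 1)) : ℕ) - S (j : ℕ)) = α j
      simp only [Fin.val_zero]
      omega
    · funext j
      show α j + min (β j - α j) ((Fin.last q : ℕ) - S (j : ℕ)) = β j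
      simp only [Fin.val_last]
      have h1 := hSstep (j : ℕ) j.isLt
      have h2 := hStop ((j : ℕ) + 1)
      have h3 := hle j
      simp only [Fin.eta] at h1
      omega
    · intro i
      refine ⟨strictMono_of_lt_succ' _ ?_, fun j => ?_, fun j => ?_⟩
      · intro j hj
        simp only []
        have h1 := hSstep (j : ℕ) j.isLt
        have h2 := hstrip j hj
        have h3 := hle j
        have h4 := hle ⟨(j : ℕ) + 1, hj⟩
        simp only [Fin.eta] at h1
        omega
      · show 1 ≤ α j + min (β j - α j) ((i : ℕ) - S (j : ℕ))
        have := hα1 j; omega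
      · show α j + min (β j - α j) ((i : ℕ) - S (j : ℕ)) ≤ m + p
        have := hle j; have := hβ2 j; omega
    · intro i
      have hiq : (i : ℕ) < q := i.isLt
      have hex : ∃ n, ∃ hn : n < p, S n ≤ (i : ℕ) ∧ (i : ℕ) < S n + (β ⟨n, hn⟩ - α ⟨n, hn⟩) := by
        by_contra hcon
        push_neg at hcon
        have hall : ∀ n, n ≤ p → S n ≤ (i : ℕ) := by
          intro n
          induction n with
          | zero => intro _; omega
          | succ n ih =>
            intro hn
            have h1 := ih (by omega)
            have h2 := hcon n (by omega) h1
            have h3 := hSstep n (by omega)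
            omega
        have := hall p le_rfl
        omega
      obtain ⟨n, hn, hn1, hn2⟩ := hex
      have hSn := hSstep n hn
      refine ⟨⟨n, hn⟩, ?_, ?_⟩
      · simp only [Fin.val_succ, Fin.coe_castSucc]
        omega
      · intro j' hj'
        have hne : (j' : ℕ) ≠ n := fun h => hj' (Fin.ext h)
        simp only [Fin.val_succ, Fin.coe_castSucc]
        rcases Nat.lt_or_ge (j' : ℕ) n with hlt | hge
        · have h1 := hSstep (j' : ℕ) j'.isLt
          have h2 : S ((j' : ℕ) + 1) ≤ S n := hSmono (by omega)
          simp only [Fin.eta] at h1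
          omega
        · have h2 : S (n + 1) ≤ S (j' : ℕ) := hSmono (by omega)
          omega
    · intro i₁ i₂ h12 j₁ j₂ hc1 hc2
      simp only [Fin.val_succ, Fin.coe_castSucc, ne_eq] at hc1 hc2
      have k1 : S (j₁ : ℕ) ≤ (i₁ : ℕ) ∧ (i₁ : ℕ) < S (j₁ : ℕ) + (β j₁ - α j₁) := by omega
      have k2 : S (j₂ : ℕ) ≤ (i₂ : ℕ) ∧ (i₂ : ℕ) < S (j₂ : ℕ) + (β j₂ - α j₂) := by omega
      by_contra hcon
      push_neg at hcon
      have hcon' : (j₂ : ℕ) < (j₁ : ℕ) := hcon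
      have h3 := hSstep (j₂ : ℕ) j₂.isLt
      have h4 : S ((j₂ : ℕ) + 1) ≤ S (j₁ : ℕ) := hSmono (by omega)
      simp only [Fin.eta] at h3
      omega
  · rintro ⟨c, hc0, hcl, hprop, hcov, hinc⟩
    -- ℕ-indexed version of the chain
    set C : ℕ → Fin p → ℕ := fun n j => c ⟨min n q, by omega⟩ j with hCdef
    have hCeq : ∀ (n : ℕ) (h : n ≤ q), C n = c ⟨n, by omega⟩ := by
      intro n h
      funext j
      simp only [hCdef, Nat.min_eq_left h]
    have hC0' : C 0 = α := by
      rw [hCeq 0 (by omega)]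
      have h0 : (⟨0, by omega⟩ : Fin (q + 1)) = 0 := rfl
      rw [h0, hc0]
    have hCq' : C q = β := by
      rw [hCeq q le_rfl]
      have h0 : (⟨q, by omega⟩ : Fin (q + 1)) = Fin.last q := rfl
      rw [h0, hcl]
    have hcC : ∀ (k : ℕ) (hk : k < q),
        c (⟨k, hk⟩ : Fin q).succ = C (k + 1) ∧ c (⟨k, hk⟩ : Fin q).castSucc = C k := by
      intro k hk
      constructor
      · rw [hCeq (k + 1) (by omega)]; rfl
      · rw [hCeq k (by omega)]; rfl
    have hstep : ∀ n, n < q →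
        ∃ j, C (n + 1) j = C n j + 1 ∧ ∀ j' ≠ j, C (n + 1) j' = C n j' := by
      intro n hn
      rw [hCeq (n + 1) (by omega), hCeq n (by omega)]
      exact hcov ⟨n, hn⟩
    -- the changed index of each step
    set J : ℕ → Fin p := fun n =>
      if h : n < q then Classical.choose (hstep n h) else ⟨0, hp⟩ with hJdef
    have hJspec : ∀ n (h : n < q),
        C (n + 1) (J n) = C n (J n) + 1 ∧ ∀ j' ≠ J n, C (n + 1) j' = C n j' := by
      intro n h
      simp only [hJdef, dif_pos h]
      exact Classical.choose_spec (hstep n h)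
    have hJuniq : ∀ n (h : n < q) (j : Fin p), C (n + 1) j ≠ C n j → j = J n := by
      intro n h j hj
      by_contra hne
      exact hj ((hJspec n h).2 j hne)
    have hJstep : ∀ n, n + 1 < q → J n ≤ J (n + 1) := by
      intro n hn
      have h1 := (hJspec n (by omega)).1
      have h2 := (hJspec (n + 1) hn).1
      have hA := hcC n (by omega)
      have hB := hcC (n + 1) hn
      refine hinc ⟨n, by omega⟩ ⟨n + 1, hn⟩ rfl (J n) (J (n + 1)) ?_ ?_
      · rw [hA.1, hA.2]; omega
      · rw [hB.1, hB.2]; omega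
    have hJmono : ∀ b, b < q → ∀ a, a ≤ b → J a ≤ J b := by
      intro b
      induction b with
      | zero =>
        intro _ a ha
        have h0 : a = 0 := by omega
        subst h0; exact le_refl _
      | succ b ih =>
        intro hb a ha
        rcases Nat.lt_or_ge a (b + 1) with h | h
        · exact le_trans (ih (by omega) a (by omega)) (hJstep b hb)
        · have h0 : a = b + 1 := by omega
          subst h0; exact le_refl _
    -- constancy off the changed indices
    have hconst : ∀ (j : Fin p) (b : ℕ), b ≤ q → ∀ a, a ≤ b →
        (∀ n, a ≤ n → n < b → J n ≠ j) → C a j = C b j := by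
      intro j b
      induction b with
      | zero =>
        intro _ a ha _
        have h0 : a = 0 := by omega
        subst h0; rfl
      | succ b ih =>
        intro hb a ha hno
        rcases Nat.lt_or_ge a (b + 1) with h | h
        · have h1 : C a j = C b j :=
            ih (by omega) a (by omega) (fun n h1 h2 => hno n h1 (by omega))
          have h2 : C (b + 1) j = C b j :=
            (hJspec b (by omega)).2 j (Ne.symm (hno b (by omega) (by omega)))
          omega
        · have h0 : a = b + 1 := by omega
          subst h0; rfl
    -- coordinates only increase
    have hCmono : ∀ b, b ≤ q → ∀ j, C 0 j ≤ C b j := by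
      intro b
      induction b with
      | zero => intro _ j; exact le_refl _
      | succ b ih =>
        intro hb j
        have h1 := ih (by omega) j
        obtain ⟨hA, hB⟩ := hJspec b (by omega)
        by_cases h : j = J b
        · subst h; omega
        · rw [hB j h]; exact h1
    have hle : ∀ j, α j ≤ β j := by
      intro j
      have := hCmono q le_rfl j
      rw [hC0', hCq'] at this
      exact this
    -- sum increases by 1 each step
    have hsumstep : ∀ n, n < q →
        ∑ j : Fin p, C (n + 1) j = (∑ j : Fin p, C n j) + 1 := by
      intro n hn
      obtain ⟨h1, h2⟩ := hJspec n hn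
      have h3 : ∀ j : Fin p, C (n + 1) j = C n j + if j = J n then 1 else 0 := by
        intro j
        by_cases h : j = J n
        · subst h; simp [h1]
        · simp [h, h2 j h]
      rw [Finset.sum_congr rfl (fun j _ => h3 j), Finset.sum_add_distrib,
        Finset.sum_ite_eq' Finset.univ (J n) (fun _ => 1)]
      simp
    have hsumtot : ∀ n, n ≤ q → ∑ j : Fin p, C n j = (∑ j : Fin p, C 0 j) + n := by
      intro n
      induction n with
      | zero => intro _; simp
      | succ n ih =>
        intro hn
        rw [hsumstep n (by omega), ih (by omega)]
        omega
    have hsums : (∑ j : Fin p, β j) = (∑ j : Fin p, α j) + q := by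
      have := hsumtot q le_rfl
      rw [hC0', hCq'] at this
      exact this
    -- horizontal strip condition
    have hstrip : ∀ (j : Fin p) (hj : (j : ℕ) + 1 < p), β j < α ⟨(j : ℕ) + 1, hj⟩ := by
      intro j hj
      set j' : Fin p := ⟨(j : ℕ) + 1, hj⟩ with hj'def
      have hjj' : j < j' := by
        rw [Fin.lt_def]; simp [hj'def]
      by_cases hch : β j = α j
      · rw [hch]; exact hα hjj'
      · have hT : ∃ n, n < q ∧ J n = j := by
          by_contra hcon
          push_neg at hcon
          have h1 : C 0 j = C q j := hconst j q le_rfl 0 (by omega) (fun n _ h2 => hcon n h2)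
          rw [hC0', hCq'] at h1
          exact hch h1.symm
        obtain ⟨n₀, hn₀, hJn₀⟩ := hT
        set T : Finset ℕ := (Finset.range q).filter (fun n => J n = j) with hTdef
        have hTne : T.Nonempty := ⟨n₀, by simp [hTdef, hn₀, hJn₀]⟩
        set N : ℕ := T.max' hTne with hNdef
        have hNmem : N ∈ T := T.max'_mem hTne
        have hNq : N < q := by
          have := hNmem; simp [hTdef] at this; exact this.1
        have hJN : J N = j := by
          have := hNmem; simp [hTdef] at this; exact this.2
        have hNmax : ∀ n, n < q → J n = j → n ≤ N := by
          intro n h1 h2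
          exact T.le_max' n (by simp [hTdef, h1, h2])
        -- C (N+1) j = β j
        have hCN1 : C (N + 1) j = β j := by
          have h1 : C (N + 1) j = C q j := by
            refine hconst j q le_rfl (N + 1) (by omega) ?_
            intro n h1 h2 h3
            have := hNmax n h2 h3
            omega
          rw [hCq'] at h1
          exact h1
        -- C (N+1) j' = α j'
        have hCN1' : C (N + 1) j' = α j' := by
          have h1 : C 0 j' = C (N + 1) j' := by
            refine hconst j' (N + 1) (by omega) 0 (by omega) ?_
            intro n _ h2 h3
            have h4 : J n ≤ J N := by
              rcases Nat.lt_or_ge n N with h | h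
              · exact hJmono N hNq n (by omega)
              · have : n = N := by omega
                subst this; exact le_refl _
            rw [hJN] at h4
            rw [h3] at h4
            exact absurd h4 (not_le.mpr hjj')
          rw [hC0'] at h1
          exact h1.symm
        have hsm : StrictMono (C (N + 1)) := by
          rw [hCeq (N + 1) (by omega)]
          exact (hprop _).1
        have := hsm hjj'
        rw [hCN1, hCN1'] at this
        exact this
    refine ⟨?_, ?_, ?_⟩
    · rw [Finset.sum_sub_distrib, Finset.sum_sub_distrib]
      have h2 : ((∑ j : Fin p, β j : ℕ) : ℤ) = ∑ j : Fin p, (β j : ℤ) := by push_cast; rfl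
      have h3 : ((∑ j : Fin p, α j : ℕ) : ℤ) = ∑ j : Fin p, (α j : ℤ) := by push_cast; rfl
      omega
    · intro k
      rw [hβc k]
      have h1 := hle (Fin.rev k)
      have := hα2 (Fin.rev k); have := hβ2 (Fin.rev k)
      omega
    · intro k h
      rw [hβc ⟨(k : ℕ) + 1, h⟩]
      have hkp := k.isLt
      have hk : p - 2 - (k : ℕ) < p := by omega
      have hk1 : (p - 2 - (k : ℕ)) + 1 < p := by omega
      have hs := hstrip ⟨p - 2 - (k : ℕ), hk⟩ hk1
      have hrev1 : Fin.rev (⟨(k : ℕ) + 1, h⟩ : Fin p) = ⟨p - 2 - (k : ℕ), hk⟩ := by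
        ext; rw [Fin.val_rev]; simp; omega
      have hrev0 : Fin.rev k = ⟨(p - 2 - (k : ℕ)) + 1, hk1⟩ := by
        ext; rw [Fin.val_rev]; simp; omega
      rw [hrev1, hrev0]
      have hs' : β ⟨p - 2 - (k : ℕ), hk⟩ < α ⟨(p - 2 - (k : ℕ)) + 1, hk1⟩ := hs
      have := hα2 ⟨(p - 2 - (k : ℕ)) + 1, hk1⟩
      have := hβ2 ⟨p - 2 - (k : ℕ), hk⟩
      omega
end

section
/- Let $A \in \mathbb{C}^{n \times n}$, $B \in \mathbb{C}^{n \times m}$, $C \in \mathbb{C}^{p \times n}$, $F \in \mathbb{C}^{m \times p}$, and suppose $D(s) \in \mathbb{C}[s]^{m \times m}$ and $N(s) \in \mathbb{C}[s]^{p \times m}$ satisfy $\det D(s) = \det(sI - A)$ and $N(s) D(s)^{-1} = C(sI-A)^{-1}B$ as rational matrix functions. Then for any $s_0 \in \mathbb{C}$ that is not an eigenvalue of $A$: $\det(s_0 I - A - BFC) = 0$ if and only if the column span of $\begin{bmatrix} F \\ I_p \end{bmatrix}$ meets the column span of $\begin{bmatrix} D(s_0) \\ N(s_0) \end{bmatrix}$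 nontrivially, i.e., $\det \begin{bmatrix} F & D(s_0) \\ I_p & N(s_0) \end{bmatrix} = 0$. -/
open Polynomial Matrix

lemma eval_det' {k : ℕ} (M : Matrix (Fin k) (Fin k) ℂ[X]) (r : ℂ) :
    Polynomial.eval r M.det = (M.map (Polynomial.eval r)).det := by
  have := (Polynomial.evalRingHom r).map_det M
  simpa [RingHom.mapMatrix_apply] using this

lemma map_eval_mul {a b c : ℕ} (M : Matrix (Fin a) (Fin b) ℂ[X])
    (P : Matrix (Fin b) (Fin c) ℂ[X]) (r : ℂ) :
    (M * P).map (Polynomial.eval r) = M.map (Polynomial.eval r) * P.map (Polynomial.eval r) :=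
  Matrix.map_mul (f := Polynomial.evalRingHom r)

/-- Pole placement via Schubert calculus.  Given a linear system
`(A, B, C)` with coprime factorization `N(s)D(s)⁻¹ = C(sI - A)⁻¹B`,
`det D(s) = det(sI - A)` (expressed polynomially as `N·adj(D) = C·adj(sI-A)·B`),
and a feedback law `F`, for every `s₀` that is not an eigenvalue of `A` the closed-loop
characteristic polynomial `det(s₀I - A - BFC)` vanishes iff
`det [F, D(s₀); I, N(s₀)] = 0`. -/
theorem stmt_17 (n m p : ℕ)
    (A : Matrix (Fin n) (Fin n) ℂ) (B : Matrix (Fin n) (Fin m) ℂ)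
    (C : Matrix (Fin p) (Fin n) ℂ) (F : Matrix (Fin m) (Fin p) ℂ)
    (D : Matrix (Fin m) (Fin m) (Polynomial ℂ)) (N : Matrix (Fin p) (Fin m) (Polynomial ℂ))
    (hD : D.det = A.charpoly)
    (hN : N * D.adjugate =
      C.map Polynomial.C * (Matrix.charmatrix A).adjugate * B.map Polynomial.C)
    (s₀ : ℂ) (hs₀ : (s₀ • (1 : Matrix (Fin n) (Fin n) ℂ) - A).det ≠ 0) :
    (s₀ • (1 : Matrix (Fin n) (Fin n) ℂ) - A - B * F * C).det = 0 ↔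
      Matrix.det ((Matrix.fromBlocks F (D.map (Polynomial.eval s₀))
        (1 : Matrix (Fin p) (Fin p) ℂ) (N.map (Polynomial.eval s₀))).submatrix
          id Sum.swap) = 0 := by
  set S : Matrix (Fin n) (Fin n) ℂ := s₀ • 1 - A with hSdef
  set D₀ : Matrix (Fin m) (Fin m) ℂ := D.map (Polynomial.eval s₀) with hD₀
  set N₀ : Matrix (Fin p) (Fin m) ℂ := N.map (Polynomial.eval s₀) with hN₀
  -- charmatrix maps to S
  have hcm : (Matrix.charmatrix A).map (Polynomial.eval s₀) = S := by
    ext i j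
    by_cases h : i = j
    · subst h; simp [hSdef, Matrix.sub_apply, Matrix.smul_apply, Matrix.one_apply]
    · simp [Matrix.charmatrix_apply_ne _ _ _ h, hSdef, Matrix.sub_apply, Matrix.smul_apply,
        Matrix.one_apply, h]
  have hdetD : D₀.det = S.det := by
    rw [hD₀, ← eval_det', hD, Matrix.charpoly, eval_det' _ s₀, hcm]
  have hSu : IsUnit S.det := isUnit_iff_ne_zero.mpr hs₀
  have hDu : IsUnit D₀.det := by rw [hdetD]; exact hSu
  have hdD : D₀.det ≠ 0 := by rw [hdetD]; exact hs₀
  -- map hN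
  have hCmap : (C.map (Polynomial.C : ℂ → ℂ[X])).map (Polynomial.eval s₀) = C := by
    ext i j; simp
  have hBmap : (B.map (Polynomial.C : ℂ → ℂ[X])).map (Polynomial.eval s₀) = B := by
    ext i j; simp
  have hadj : (D.adjugate).map (Polynomial.eval s₀) = D₀.adjugate := by
    have := (Polynomial.evalRingHom s₀).map_adjugate D
    simpa [RingHom.mapMatrix_apply] using this
  have hadjA : ((Matrix.charmatrix A).adjugate).map (Polynomial.eval s₀) = S.adjugate := by
    have := (Polynomial.evalRingHom s₀).map_adjugate (Matrix.charmatrix A)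
    simpa [RingHom.mapMatrix_apply, hcm] using this
  have hN' : N₀ * D₀.adjugate = C * S.adjugate * B := by
    have h := congrArg (fun M => M.map (Polynomial.eval s₀)) hN
    simpa [map_eval_mul, hadj, hadjA, hCmap, hBmap] using h
  -- adjugates as scaled inverses
  have hSinv : S * S⁻¹ = 1 := Matrix.mul_nonsing_inv S hSu
  have hDinv : D₀⁻¹ * D₀ = 1 := Matrix.nonsing_inv_mul D₀ hDu
  have hadjD₀ : D₀.adjugate = D₀.det • D₀⁻¹ := by
    rw [Matrix.inv_def, smul_smul, Ring.inverse_eq_inv, mul_inv_cancel₀ hdD, one_smul]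
  have hadjS : S.adjugate = D₀.det • S⁻¹ := by
    rw [Matrix.inv_def, smul_smul, Ring.inverse_eq_inv, hdetD, mul_inv_cancel₀ hs₀, one_smul]
  -- transfer function identity at s₀
  have hND : N₀ * D₀⁻¹ = C * S⁻¹ * B := by
    have h : D₀.det • (N₀ * D₀⁻¹) = D₀.det • (C * S⁻¹ * B) := by
      have := hN'
      rw [hadjD₀, hadjS] at this
      simpa [Matrix.mul_smul, Matrix.smul_mul] using this
    exact smul_right_injective _ hdD h
  have hNeq : N₀ = C * S⁻¹ * B * D₀ := by
    calc N₀ = N₀ * (D₀⁻¹ * D₀) := by rw [hDinv, Matrix.mul_one]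
    _ = (N₀ * D₀⁻¹) * D₀ := by rw [Matrix.mul_assoc]
    _ = C * S⁻¹ * B * D₀ := by rw [hND]
  -- key determinant identity
  have key : (S - B * F * C).det = (D₀ - F * N₀).det := by
    have h1 : S - B * F * C = S * (1 - S⁻¹ * B * F * C) := by
      rw [Matrix.mul_sub, Matrix.mul_one]
      congr 1
      rw [← Matrix.mul_assoc, ← Matrix.mul_assoc, ← Matrix.mul_assoc, hSinv, Matrix.one_mul]
    have h2 : D₀ - F * N₀ = (1 - F * C * S⁻¹ * B) * D₀ := by
      rw [Matrix.sub_mul, Matrix.one_mul, hNeq]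
      simp only [Matrix.mul_assoc]
    have h3 : (1 - S⁻¹ * B * F * C).det = (1 - F * C * S⁻¹ * B).det := by
      have := Matrix.det_one_sub_mul_comm (S⁻¹ * B) (F * C)
      simpa only [Matrix.mul_assoc] using this
    rw [h1, h2, Matrix.det_mul, Matrix.det_mul, h3, hdetD, mul_comm]
  rw [key, Matrix.fromBlocks_submatrix_sum_swap_right, Matrix.submatrix_id_id,
    Matrix.det_fromBlocks_one₂₂]
end
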